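/- arXiv:1901.09758 — 6 statements merged into one kernel-verified Lean document; each statement's English description precedes it below -/
import Mathlib

section
/- Let H be a real Hilbert space and A : H →L[ℝ] H a bounded self-adjoint linear operator that is coercive with constant α > 0 (i.e. ⟪A x, x⟫ ≥ α‖x‖² for all x ∈ H). Then for every g ∈ H and every t ≥ 0, the operator exponential satisfies ‖exp(−t • A) g‖ ≤ exp(−α t) · ‖g‖. -/
/-!
Along `u s = exp (-s A) g` we have `u' = -A u`, so coercivity gives
`d/ds ‖u s‖² = -2 ⟪A u, u⟫ ≤ -2α ‖u s‖²`. Hence `exp (2 α s) ‖u s‖²` is antitone, and comparing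
its values at `t` and `0` yields the bound.
-/

open NormedSpace

theorem hasDerivAt_exp_smul_apply {𝕂 E : Type*} [RCLike 𝕂] [NormedAddCommGroup E]
    [NormedSpace 𝕂 E] [CompleteSpace E] (B : E →L[𝕂] E) (g : E) (s : 𝕂) :
    HasDerivAt (fun s : 𝕂 => exp (s • B) g) (B (exp (s • B) g)) s := by
  simpa using (hasDerivAt_exp_smul_const' B s).clm_apply (hasDerivAt_const s g)

section Coercive

variable {H : Type*} [NormedAddCommGroup H] [InnerProductSpace ℝ H]
  {A : H →L[ℝ] H} {α : ℝ} {u : ℝ → H}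

theorem antitone_exp_mul_norm_sq_of_hasDerivAt_neg
    (hcoer : ∀ x : H, α * ‖x‖ ^ 2 ≤ inner ℝ (A x) x)
    (hu : ∀ s, HasDerivAt u (-A (u s)) s) :
    Antitone fun s => Real.exp (2 * α * s) * ‖u s‖ ^ 2 := by
  have hexp (s : ℝ) : HasDerivAt (fun s => Real.exp (2 * α * s))
      (Real.exp (2 * α * s) * (2 * α)) s :=
    ((hasDerivAt_id s).const_mul (2 * α)).exp.congr_deriv (by simp)
  refine antitone_of_hasDerivAt_nonpos (fun s => (hexp s).mul (hu s).norm_sq) fun s => ?_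
  have hdecay : 2 * inner ℝ (u s) (-A (u s)) ≤ -(2 * α) * ‖u s‖ ^ 2 := by
    rw [inner_neg_right, real_inner_comm]
    linarith [hcoer (u s)]
  have hpos := Real.exp_pos (2 * α * s)
  rw [Pi.zero_apply]
  nlinarith

theorem norm_le_exp_mul_of_hasDerivAt_neg
    (hcoer : ∀ x : H, α * ‖x‖ ^ 2 ≤ inner ℝ (A x) x)
    (hu : ∀ s, HasDerivAt u (-A (u s)) s) {t : ℝ} (ht : 0 ≤ t) :
    ‖u t‖ ≤ Real.exp (-α * t) * ‖u 0‖ := by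
  have hmono := antitone_exp_mul_norm_sq_of_hasDerivAt_neg hcoer hu ht
  have hsq : (Real.exp (α * t) * ‖u t‖) ^ 2 ≤ ‖u 0‖ ^ 2 := by
    rw [mul_pow, ← Real.exp_nat_mul]
    simpa [mul_assoc] using hmono
  have hle : Real.exp (α * t) * ‖u t‖ ≤ ‖u 0‖ :=
    (pow_le_pow_iff_left₀ (by positivity) (norm_nonneg _) two_ne_zero).1 hsq
  rw [neg_mul, Real.exp_neg, ← div_eq_inv_mul, le_div_iff₀' (Real.exp_pos _)]
  exact hle

end Coercive

theorem semigroup_decay_general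
    {H : Type*} [NormedAddCommGroup H] [InnerProductSpace ℝ H] [CompleteSpace H]
    (A : H →L[ℝ] H) (α : ℝ)
    (hcoer : ∀ x : H, α * ‖x‖ ^ 2 ≤ (inner ℝ (A x) x : ℝ))
    (g : H) (t : ℝ) (ht : 0 ≤ t) :
    ‖NormedSpace.exp ((-t) • A) g‖ ≤ Real.exp (-α * t) * ‖g‖ := by
  have hu (s : ℝ) : HasDerivAt (fun s : ℝ => exp (s • -A) g) (-A (exp (s • -A) g)) s :=
    hasDerivAt_exp_smul_apply (-A) g s
  simpa [smul_neg, neg_smul] using norm_le_exp_mul_of_hasDerivAt_neg hcoer hu ht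

/-- Semigroup decay for a coercive self-adjoint bounded operator on a real Hilbert space:
`‖exp(-t • A) g‖ ≤ exp(-α t) ‖g‖` for `t ≥ 0`. -/
theorem semigroup_decay
    {H : Type*} [NormedAddCommGroup H] [InnerProductSpace ℝ H] [CompleteSpace H]
    (A : H →L[ℝ] H) (α : ℝ) (hα : 0 < α)
    (hsa : ∀ x y : H, (inner ℝ (A x) y : ℝ) = inner ℝ x (A y))
    (hcoer : ∀ x : H, α * ‖x‖ ^ 2 ≤ (inner ℝ (A x) x : ℝ))
    (g : H) (t : ℝ) (ht : 0 ≤ t) :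
    ‖NormedSpace.exp ((-t) • A) g‖ ≤ Real.exp (-α * t) * ‖g‖ :=
  semigroup_decay_general A α hcoer g t ht
end

section
/- Let H be a real Hilbert space and A : H →L[ℝ] H a bounded self-adjoint linear operator that is coercive with constant α > 0. Then for every g ∈ H, the function t ↦ exp(−t • A) g is Bochner integrable on [0, ∞), and A applied to the integral ∫₀^∞ exp(−t • A) g dt equals g; equivalently, ∫₀^∞ exp(−t • A) g dt is the unique solution ψ ∈ H of A ψ = g. -/
set_option maxHeartbeats 1000000
set_option synthInstance.maxHeartbeats 200000


open MeasureTheory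

/-- For a coercive self-adjoint bounded operator `A` on a real Hilbert space and `g ∈ H`,
the function `t ↦ exp(-t • A) g` is Bochner integrable on `(0, ∞)`, `A` applied to its
integral gives back `g`, and this integral is the unique solution of `A ψ = g`. -/
theorem parabolic_integral_solves_elliptic
    {H : Type*} [NormedAddCommGroup H] [InnerProductSpace ℝ H] [CompleteSpace H]
    (A : H →L[ℝ] H) (α : ℝ) (hα : 0 < α)
    (hsa : ∀ x y : H, (inner ℝ (A x) y : ℝ) = inner ℝ x (A y))
    (hcoer : ∀ x : H, α * ‖x‖ ^ 2 ≤ (inner ℝ (A x) x : ℝ))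
    (g : H) :
    IntegrableOn (fun t : ℝ => NormedSpace.exp ((-t) • A) g) (Set.Ioi 0) ∧
    A (∫ t in Set.Ioi (0:ℝ), NormedSpace.exp ((-t) • A) g) = g ∧
    ∀ ψ : H, A ψ = g → ψ = ∫ t in Set.Ioi (0:ℝ), NormedSpace.exp ((-t) • A) g := by
  set u : ℝ → H := fun t => NormedSpace.exp (t • (-A)) g with hu_def
  have hfun : (fun t : ℝ => NormedSpace.exp ((-t) • A) g) = u := by
    funext t; rw [hu_def]; simp only [neg_smul, smul_neg]
  rw [hfun]
  -- u 0 = g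
  have hu0 : u 0 = g := by
    show NormedSpace.exp ((0:ℝ) • (-A)) g = g
    rw [zero_smul, NormedSpace.exp_zero, ContinuousLinearMap.one_apply]
  -- derivative of u
  have hderiv : ∀ t : ℝ, HasDerivAt u (-(A (u t))) t := by
    intro t
    have h1 := hasDerivAt_exp_smul_const (𝕂 := ℝ) (-A) t
    have h2 := h1.clm_apply (hasDerivAt_const t g)
    have hc : Commute (NormedSpace.exp (t • (-A))) A :=
      (((Commute.refl A).neg_left).smul_left t).exp_left
    have heq : (NormedSpace.exp (t • (-A)) * (-A)) g + (NormedSpace.exp (t • (-A))) 0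
        = -(A (u t)) := by
      rw [map_zero, add_zero, mul_neg, hc.eq]
      simp [hu_def, ContinuousLinearMap.mul_apply]
    rw [heq] at h2
    exact h2
  have hucont : Continuous u :=
    continuous_iff_continuousAt.2 fun t => (hderiv t).continuousAt
  -- decay estimate via energy method
  have hdecay : ∀ t : ℝ, 0 ≤ t → ‖u t‖ ≤ Real.exp (-(α * t)) * ‖g‖ := by
    set w : ℝ → H := fun t => Real.exp (α * t) • u t with hw_def
    have hw : ∀ t : ℝ, HasDerivAt w (α • w t - A (w t)) t := by
      intro t
      have he : HasDerivAt (fun s : ℝ => Real.exp (α * s)) (α * Real.exp (α * t)) t := by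
        have := ((hasDerivAt_id t).const_mul α).exp
        simpa [mul_comm] using this
      have := he.smul (hderiv t)
      convert this using 1
      · rfl
      simp only [hw_def, ContinuousLinearMap.map_smul, smul_smul, smul_neg,
        sub_eq_add_neg]
      abel
    set φ : ℝ → ℝ := fun t => (inner ℝ (w t) (w t) : ℝ) with hφ_def
    have hφd : ∀ t : ℝ, HasDerivAt φ
        ((inner ℝ (w t) (α • w t - A (w t)) : ℝ) + inner ℝ (α • w t - A (w t)) (w t)) t :=
      fun t => (hw t).inner ℝ (hw t)
    have hφ_nonpos : ∀ t : ℝ, deriv φ t ≤ 0 := by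
      intro t
      rw [(hφd t).deriv]
      have h1 : (inner ℝ (w t) (α • w t - A (w t)) : ℝ) = inner ℝ (α • w t - A (w t)) (w t) := by
        rw [real_inner_comm]
      rw [h1]
      have h2 : (inner ℝ (α • w t - A (w t)) (w t) : ℝ)
          = α * ‖w t‖ ^ 2 - inner ℝ (A (w t)) (w t) := by
        rw [inner_sub_left, real_inner_smul_left, real_inner_self_eq_norm_sq]
      rw [h2]
      have := hcoer (w t)
      linarith
    have hanti : AntitoneOn φ (Set.Ici 0) := by
      apply antitoneOn_of_deriv_nonpos (convex_Ici 0)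
      · exact (continuous_iff_continuousAt.2 fun t => (hφd t).continuousAt).continuousOn
      · intro t _; exact (hφd t).differentiableAt.differentiableWithinAt
      · intro t _; exact hφ_nonpos t
    intro t ht
    have hle : φ t ≤ φ 0 := hanti Set.self_mem_Ici ht ht
    have hφt : φ t = ‖w t‖ ^ 2 := real_inner_self_eq_norm_sq (w t)
    have hφ0 : φ 0 = ‖g‖ ^ 2 := by
      rw [hφ_def]
      simp only [hw_def, mul_zero, Real.exp_zero, one_smul, hu0]
      exact real_inner_self_eq_norm_sq g
    have hwt : ‖w t‖ ≤ ‖g‖ := by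
      have h2 : ‖w t‖ ^ 2 ≤ ‖g‖ ^ 2 := by rw [← hφt, ← hφ0]; exact hle
      nlinarith [norm_nonneg (w t), norm_nonneg g]
    have hwnorm : ‖w t‖ = Real.exp (α * t) * ‖u t‖ := by
      rw [hw_def]; simp [norm_smul, abs_of_pos (Real.exp_pos _)]
    rw [hwnorm] at hwt
    have hepos : (0:ℝ) < Real.exp (α * t) := Real.exp_pos _
    rw [Real.exp_neg]
    rw [inv_mul_eq_div, le_div_iff₀ hepos]
    linarith [hwt]
  -- integrability
  have hint : IntegrableOn u (Set.Ioi 0) := by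
    apply Integrable.mono' (g := fun t => ‖g‖ * Real.exp (-α * t))
    · exact ((exp_neg_integrableOn_Ioi 0 hα).const_mul ‖g‖)
    · exact hucont.aestronglyMeasurable.restrict
    · filter_upwards [ae_restrict_mem measurableSet_Ioi] with t ht
      have := hdecay t (le_of_lt ht)
      calc ‖u t‖ ≤ Real.exp (-(α * t)) * ‖g‖ := this
        _ = ‖g‖ * Real.exp (-α * t) := by rw [neg_mul]; ring
  refine ⟨hint, ?_, ?_⟩
  · -- A applied to the integral gives g
    have hAu_int : IntegrableOn (fun t => A (u t)) (Set.Ioi 0) :=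
      A.integrable_comp hint
    have htend : Filter.Tendsto (fun t => -(u t)) Filter.atTop (nhds 0) := by
      rw [← neg_zero]
      apply Filter.Tendsto.neg
      have hb : ∀ᶠ t in Filter.atTop, ‖u t‖ ≤ Real.exp (-(α * t)) * ‖g‖ := by
        filter_upwards [Filter.eventually_ge_atTop 0] with t ht
        exact hdecay t ht
      have h1 : Filter.Tendsto (fun t : ℝ => α * t) Filter.atTop Filter.atTop :=
        Filter.Tendsto.const_mul_atTop hα Filter.tendsto_id
      have h2 : Filter.Tendsto (fun t : ℝ => Real.exp (-(α * t)) * ‖g‖) Filter.atTop (nhds 0) := by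
        have := Real.tendsto_exp_atBot.comp (Filter.tendsto_neg_atBot_iff.mpr h1)
        simpa using this.mul_const ‖g‖
      exact squeeze_zero_norm' hb h2
    have hcontat : ContinuousWithinAt (fun t => -(u t)) (Set.Ici 0) 0 :=
      (hucont.neg.continuousAt).continuousWithinAt
    have hd : ∀ t ∈ Set.Ioi (0:ℝ), HasDerivAt (fun t => -(u t)) (A (u t)) t := by
      intro t _
      exact (by simpa using (hderiv t).neg : HasDerivAt (-u) (A (u t)) t)
    have key := integral_Ioi_of_hasDerivAt_of_tendsto hcontat hd hAu_int htend
    rw [← A.integral_comp_comm hint, key, hu0]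
    simp
  · -- uniqueness
    intro ψ hψ
    have hAI : A (∫ t in Set.Ioi (0:ℝ), u t) = g := by
      have hAu_int : IntegrableOn (fun t => A (u t)) (Set.Ioi 0) :=
        A.integrable_comp hint
      have htend : Filter.Tendsto (fun t => -(u t)) Filter.atTop (nhds 0) := by
        rw [← neg_zero]
        apply Filter.Tendsto.neg
        have hb : ∀ᶠ t in Filter.atTop, ‖u t‖ ≤ Real.exp (-(α * t)) * ‖g‖ := by
          filter_upwards [Filter.eventually_ge_atTop 0] with t ht
          exact hdecay t ht
        have h1 : Filter.Tendsto (fun t : ℝ => α * t) Filter.atTop Filter.atTop :=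
          Filter.Tendsto.const_mul_atTop hα Filter.tendsto_id
        have h2 : Filter.Tendsto (fun t : ℝ => Real.exp (-(α * t)) * ‖g‖) Filter.atTop (nhds 0) := by
          have := Real.tendsto_exp_atBot.comp (Filter.tendsto_neg_atBot_iff.mpr h1)
          simpa using this.mul_const ‖g‖
        exact squeeze_zero_norm' hb h2
      have hcontat : ContinuousWithinAt (fun t => -(u t)) (Set.Ici 0) 0 :=
        (hucont.neg.continuousAt).continuousWithinAt
      have hd : ∀ t ∈ Set.Ioi (0:ℝ), HasDerivAt (fun t => -(u t)) (A (u t)) t := by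
        intro t _
        exact (by simpa using (hderiv t).neg : HasDerivAt (-u) (A (u t)) t)
      have key := integral_Ioi_of_hasDerivAt_of_tendsto hcontat hd hAu_int htend
      rw [← A.integral_comp_comm hint, key, hu0]
      simp
    have hdiff : A (ψ - ∫ t in Set.Ioi (0:ℝ), u t) = 0 := by
      rw [map_sub, hψ, hAI, sub_self]
    have := hcoer (ψ - ∫ t in Set.Ioi (0:ℝ), u t)
    rw [hdiff] at this
    simp only [inner_zero_left] at this
    have hsq : ‖ψ - ∫ t in Set.Ioi (0:ℝ), u t‖ ^ 2 ≤ 0 := by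
      nlinarith [this, sq_nonneg ‖ψ - ∫ t in Set.Ioi (0:ℝ), u t‖]
    have hnorm : ‖ψ - ∫ t in Set.Ioi (0:ℝ), u t‖ = 0 := by
      have h0 : ‖ψ - ∫ t in Set.Ioi (0:ℝ), u t‖ ^ 2 = 0 := le_antisymm hsq (sq_nonneg _)
      exact (pow_eq_zero_iff (two_ne_zero)).1 h0
    rw [norm_eq_zero, sub_eq_zero] at hnorm
    exact hnorm
end

section
/- Let H be a real Hilbert space and A : H →L[ℝ] H a bounded self-adjoint linear operator that is coercive with constant α > 0. Then for all g, h ∈ H and every T > 0, |⟪A⁻¹ g, h⟫ − 2 ∫₀^T ⟪exp(−t • A) g, exp(−t • A) h⟫ dt| ≤ (exp(−2 α T) / α) · ‖g‖ · ‖h‖. -/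
open NormedSpace

set_option maxHeartbeats 1000000
set_option synthInstance.maxHeartbeats 400000

section Aux
variable {H : Type*} [NormedAddCommGroup H] [InnerProductSpace ℝ H] [CompleteSpace H]

local notation "E" => fun (A : H →L[ℝ] H) (t : ℝ) => NormedSpace.exp ((-t) • A)

lemma expE_comm (A : H →L[ℝ] H) (t : ℝ) (x : H) :
    NormedSpace.exp ((-t) • A) (A x) = A (NormedSpace.exp ((-t) • A) x) := by
  have hc : Commute ((-t) • A) A := (Commute.refl A).smul_left (-t)
  have := (hc.exp_left)
  calc NormedSpace.exp ((-t) • A) (A x)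
      = (NormedSpace.exp ((-t) • A) * A) x := rfl
    _ = (A * NormedSpace.exp ((-t) • A)) x := by rw [this]
    _ = A (NormedSpace.exp ((-t) • A) x) := rfl

lemma expE_hasDerivAt (A : H →L[ℝ] H) (x : H) (t : ℝ) :
    HasDerivAt (fun s : ℝ => NormedSpace.exp ((-s) • A) x)
      (-(NormedSpace.exp ((-t) • A) (A x))) t := by
  have h1 : HasDerivAt (fun u : ℝ => NormedSpace.exp (u • A))
      (NormedSpace.exp ((-t) • A) * A) (-t) := hasDerivAt_exp_smul_const A (-t)
  have hneg : HasDerivAt (fun s : ℝ => -s) (-1) t := (hasDerivAt_id t).neg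
  have h2 : HasDerivAt (fun s : ℝ => NormedSpace.exp ((-s) • A))
      ((-1 : ℝ) • (NormedSpace.exp ((-t) • A) * A)) t := h1.scomp t hneg
  have h3 := h2.clm_apply (hasDerivAt_const t x)
  simpa using h3

lemma expE_continuous (A : H →L[ℝ] H) (x : H) :
    Continuous (fun t : ℝ => NormedSpace.exp ((-t) • A) x) := by
  have : Continuous (fun t : ℝ => NormedSpace.exp ((-t) • A)) :=
    continuous_iff_continuousAt.2 fun t =>
      ((hasDerivAt_exp_smul_const A (-t)).scomp t ((hasDerivAt_id t).neg)).continuousAt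
  exact (this.clm_apply continuous_const : _)

lemma inner_expE_hasDerivAt (A : H →L[ℝ] H)
    (hsa : ∀ x y : H, (inner ℝ (A x) y : ℝ) = inner ℝ x (A y)) (x y : H) (t : ℝ) :
    HasDerivAt (fun s : ℝ =>
        (inner ℝ (NormedSpace.exp ((-s) • A) x) (NormedSpace.exp ((-s) • A) y) : ℝ))
      (-(2 * (inner ℝ (NormedSpace.exp ((-t) • A) (A x)) (NormedSpace.exp ((-t) • A) y) : ℝ))) t := by
  have hd := (expE_hasDerivAt A x t).inner ℝ (expE_hasDerivAt A y t)
  have hswap : (inner ℝ (NormedSpace.exp ((-t) • A) x) (NormedSpace.exp ((-t) • A) (A y)) : ℝ)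
      = (inner ℝ (NormedSpace.exp ((-t) • A) (A x)) (NormedSpace.exp ((-t) • A) y) : ℝ) := by
    rw [expE_comm A t y, ← hsa, ← expE_comm A t x]
  refine hd.congr_deriv ?_
  rw [inner_neg_left, inner_neg_right, hswap]
  ring

lemma inner_expE_continuous (A : H →L[ℝ] H) (x y : H) :
    Continuous (fun t : ℝ =>
      (inner ℝ (NormedSpace.exp ((-t) • A) x) (NormedSpace.exp ((-t) • A) y) : ℝ)) :=
  (expE_continuous A x).inner (expE_continuous A y)

lemma expE_norm_decay (A : H →L[ℝ] H) (α : ℝ) (hα : 0 < α)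
    (hsa : ∀ x y : H, (inner ℝ (A x) y : ℝ) = inner ℝ x (A y))
    (hcoer : ∀ x : H, α * ‖x‖ ^ 2 ≤ (inner ℝ (A x) x : ℝ))
    (x : H) (T : ℝ) (hT : 0 ≤ T) :
    ‖NormedSpace.exp ((-T) • A) x‖ ≤ Real.exp (-(α * T)) * ‖x‖ := by
  set N : ℝ → ℝ := fun t => (inner ℝ (NormedSpace.exp ((-t) • A) x) (NormedSpace.exp ((-t) • A) x) : ℝ)
  set G : ℝ → ℝ := fun t => Real.exp (2 * α * t) * N t
  have hNder : ∀ t, HasDerivAt N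
      (-(2 * (inner ℝ (NormedSpace.exp ((-t) • A) (A x)) (NormedSpace.exp ((-t) • A) x) : ℝ))) t :=
    fun t => inner_expE_hasDerivAt A hsa x x t
  have hGder : ∀ t, HasDerivAt G
      (Real.exp (2 * α * t) * (2 * α * N t
        - 2 * (inner ℝ (NormedSpace.exp ((-t) • A) (A x)) (NormedSpace.exp ((-t) • A) x) : ℝ))) t := by
    intro t
    have he : HasDerivAt (fun t : ℝ => Real.exp (2 * α * t)) (Real.exp (2 * α * t) * (2 * α)) t := by
      simpa using ((hasDerivAt_id t).const_mul (2 * α)).exp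
    have := he.mul (hNder t)
    refine this.congr_deriv ?_
    ring
  have hG'le : ∀ t, Real.exp (2 * α * t) * (2 * α * N t
      - 2 * (inner ℝ (NormedSpace.exp ((-t) • A) (A x)) (NormedSpace.exp ((-t) • A) x) : ℝ)) ≤ 0 := by
    intro t
    apply mul_nonpos_of_nonneg_of_nonpos (Real.exp_nonneg _)
    have hc := hcoer (NormedSpace.exp ((-t) • A) x)
    have hNeq : N t = ‖NormedSpace.exp ((-t) • A) x‖ ^ 2 := real_inner_self_eq_norm_sq _
    have : (inner ℝ (NormedSpace.exp ((-t) • A) (A x)) (NormedSpace.exp ((-t) • A) x) : ℝ)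
        = (inner ℝ (A (NormedSpace.exp ((-t) • A) x)) (NormedSpace.exp ((-t) • A) x) : ℝ) := by
      rw [expE_comm]
    rw [this, hNeq]
    nlinarith [hc]
  -- G T ≤ G 0 via FTC
  have hcont : Continuous fun t => Real.exp (2 * α * t) * (2 * α * N t
      - 2 * (inner ℝ (NormedSpace.exp ((-t) • A) (A x)) (NormedSpace.exp ((-t) • A) x) : ℝ)) := by
    apply Continuous.mul (by continuity)
    exact ((continuous_const.mul (inner_expE_continuous A x x)).sub
      (continuous_const.mul (inner_expE_continuous A (A x) x)))
  have hFTC : (∫ t in (0:ℝ)..T, Real.exp (2 * α * t) * (2 * α * N t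
      - 2 * (inner ℝ (NormedSpace.exp ((-t) • A) (A x)) (NormedSpace.exp ((-t) • A) x) : ℝ)))
      = G T - G 0 := by
    exact intervalIntegral.integral_eq_sub_of_hasDerivAt (fun t _ => hGder t)
      (hcont.intervalIntegrable 0 T)
  have hint_le : (∫ t in (0:ℝ)..T, Real.exp (2 * α * t) * (2 * α * N t
      - 2 * (inner ℝ (NormedSpace.exp ((-t) • A) (A x)) (NormedSpace.exp ((-t) • A) x) : ℝ))) ≤ 0 := by
    have := intervalIntegral.integral_mono_on (μ := MeasureTheory.volume) hT
      (hcont.intervalIntegrable 0 T) (intervalIntegrable_const (c := (0:ℝ)))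
      (fun u _ => hG'le u)
    simpa using this
  have hGT : G T ≤ G 0 := by
    have hd : G T - G 0 ≤ 0 := by rw [← hFTC]; exact hint_le
    linarith
  have hG0 : G 0 = ‖x‖ ^ 2 := by
    simp [G, N, real_inner_self_eq_norm_sq]
  have hGTval : G T = Real.exp (2 * α * T) * ‖NormedSpace.exp ((-T) • A) x‖ ^ 2 := by
    simp [G, N, real_inner_self_eq_norm_sq]
  have hsq : ‖NormedSpace.exp ((-T) • A) x‖ ^ 2 ≤ Real.exp (-(2 * α * T)) * ‖x‖ ^ 2 := by
    rw [hGTval, hG0] at hGT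
    rw [Real.exp_neg, inv_mul_eq_div, le_div_iff₀ (Real.exp_pos _)]
    linarith
  have h2 : (Real.exp (-(α * T)) * ‖x‖) ^ 2 = Real.exp (-(2 * α * T)) * ‖x‖ ^ 2 := by
    have : Real.exp (-(α * T)) ^ 2 = Real.exp (-(2 * α * T)) := by
      rw [sq, ← Real.exp_add]; ring_nf
    rw [mul_pow, this]
  refine le_of_pow_le_pow_left₀ two_ne_zero (by positivity) ?_
  rw [h2]; exact hsq

end Aux

/-- Exponentially small truncation-in-time error: for a coercive self-adjoint bounded
operator `A`, `g, h ∈ H` and `T > 0`,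
`|⟪A⁻¹ g, h⟫ - 2 ∫₀^T ⟪exp(-t•A) g, exp(-t•A) h⟫ dt| ≤ (exp(-2αT)/α) ‖g‖ ‖h‖`. -/
theorem truncated_parabolic_energy_error
    {H : Type*} [NormedAddCommGroup H] [InnerProductSpace ℝ H] [CompleteSpace H]
    (A : H →L[ℝ] H) (α : ℝ) (hα : 0 < α)
    (hsa : ∀ x y : H, (inner ℝ (A x) y : ℝ) = inner ℝ x (A y))
    (hcoer : ∀ x : H, α * ‖x‖ ^ 2 ≤ (inner ℝ (A x) x : ℝ))
    (g h : H) (T : ℝ) (hT : 0 < T) :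
    ∀ ψ : H, A ψ = g →
      |(inner ℝ ψ h : ℝ) -
          2 * ∫ t in (0:ℝ)..T,
            (inner ℝ (NormedSpace.exp ((-t) • A) g) (NormedSpace.exp ((-t) • A) h) : ℝ)| ≤
        Real.exp (-(2 * α * T)) / α * ‖g‖ * ‖h‖ := by
  intro ψ hψ
  -- FTC identity
  have hFTC : (∫ t in (0:ℝ)..T,
      -(2 * (inner ℝ (NormedSpace.exp ((-t) • A) g) (NormedSpace.exp ((-t) • A) h) : ℝ)))
      = (inner ℝ (NormedSpace.exp ((-T) • A) ψ) (NormedSpace.exp ((-T) • A) h) : ℝ)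
        - (inner ℝ ψ h : ℝ) := by
    have := intervalIntegral.integral_eq_sub_of_hasDerivAt
      (f := fun t : ℝ => (inner ℝ (NormedSpace.exp ((-t) • A) ψ) (NormedSpace.exp ((-t) • A) h) : ℝ))
      (f' := fun t : ℝ => -(2 * (inner ℝ (NormedSpace.exp ((-t) • A) g) (NormedSpace.exp ((-t) • A) h) : ℝ)))
      (fun t _ => by simpa [hψ] using inner_expE_hasDerivAt A hsa ψ h t)
      (((continuous_const.mul (inner_expE_continuous A g h)).neg).intervalIntegrable 0 T)
    simpa using this
  have key : (inner ℝ ψ h : ℝ) - 2 * (∫ t in (0:ℝ)..T,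
      (inner ℝ (NormedSpace.exp ((-t) • A) g) (NormedSpace.exp ((-t) • A) h) : ℝ))
      = (inner ℝ (NormedSpace.exp ((-T) • A) ψ) (NormedSpace.exp ((-T) • A) h) : ℝ) := by
    have h2 : (∫ t in (0:ℝ)..T,
        -(2 * (inner ℝ (NormedSpace.exp ((-t) • A) g) (NormedSpace.exp ((-t) • A) h) : ℝ)))
        = -(2 * ∫ t in (0:ℝ)..T,
          (inner ℝ (NormedSpace.exp ((-t) • A) g) (NormedSpace.exp ((-t) • A) h) : ℝ)) := by
      rw [intervalIntegral.integral_neg, intervalIntegral.integral_const_mul]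
    rw [h2] at hFTC
    linarith
  rw [key]
  -- bound ‖ψ‖
  have hψnorm : ‖ψ‖ ≤ ‖g‖ / α := by
    have hc := hcoer ψ
    rw [hψ] at hc
    have hcs : (inner ℝ g ψ : ℝ) ≤ ‖g‖ * ‖ψ‖ := real_inner_le_norm g ψ
    rcases eq_or_lt_of_le (norm_nonneg ψ) with hz | hz
    · rw [← hz]; positivity
    · rw [le_div_iff₀ hα]
      have : α * ‖ψ‖ ^ 2 ≤ ‖g‖ * ‖ψ‖ := le_trans hc hcs
      nlinarith
  have hdψ := expE_norm_decay A α hα hsa hcoer ψ T hT.le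
  have hdh := expE_norm_decay A α hα hsa hcoer h T hT.le
  calc |(inner ℝ (NormedSpace.exp ((-T) • A) ψ) (NormedSpace.exp ((-T) • A) h) : ℝ)|
      ≤ ‖NormedSpace.exp ((-T) • A) ψ‖ * ‖NormedSpace.exp ((-T) • A) h‖ :=
        abs_real_inner_le_norm _ _
    _ ≤ (Real.exp (-(α * T)) * ‖ψ‖) * (Real.exp (-(α * T)) * ‖h‖) := by
        apply mul_le_mul hdψ hdh (norm_nonneg _) (by positivity)
    _ ≤ (Real.exp (-(α * T)) * (‖g‖ / α)) * (Real.exp (-(α * T)) * ‖h‖) := by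
        apply mul_le_mul_of_nonneg_right _ (by positivity)
        exact mul_le_mul_of_nonneg_left hψnorm (Real.exp_nonneg _)
    _ = Real.exp (-(2 * α * T)) / α * ‖g‖ * ‖h‖ := by
        rw [show (-(2 * α * T)) = (-(α * T)) + (-(α * T)) by ring, Real.exp_add]
        ring
end

section
/- Let H be a real Hilbert space and A : H →L[ℝ] H a bounded self-adjoint linear operator that is coercive with constant α > 0. Then for every g ∈ H and every T > 0, ‖A⁻¹ g − ∫₀^T exp(−t • A) g dt‖ ≤ (exp(−α T) / α) · ‖g‖. -/
open NormedSpace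

/-- Exponential estimate between the elliptic corrector `A⁻¹ g` and the time-truncated
parabolic corrector: `‖A⁻¹ g - ∫₀^T exp(-t • A) g dt‖ ≤ (exp(-αT)/α) ‖g‖`. -/
theorem elliptic_vs_truncated_parabolic_corrector
    {H : Type*} [NormedAddCommGroup H] [InnerProductSpace ℝ H] [CompleteSpace H]
    (A : H →L[ℝ] H) (α : ℝ) (hα : 0 < α)
    (hsa : ∀ x y : H, (inner ℝ (A x) y : ℝ) = inner ℝ x (A y))
    (hcoer : ∀ x : H, α * ‖x‖ ^ 2 ≤ (inner ℝ (A x) x : ℝ))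
    (g : H) (T : ℝ) (hT : 0 < T) :
    ∀ ψ : H, A ψ = g →
      ‖ψ - ∫ t in (0:ℝ)..T, NormedSpace.exp ((-t) • A) g‖ ≤
        Real.exp (-(α * T)) / α * ‖g‖ := by
  intro ψ hψ
  -- the semigroup applied to ψ
  set F : ℝ → H := fun t => exp (t • (-A)) ψ with hFdef
  have hF0 : F 0 = ψ := by simp [hFdef, exp_zero]
  have hF' : ∀ t : ℝ, HasDerivAt F (-(A (F t))) t := by
    intro t
    have h := hasDerivAt_exp_smul_const' (𝕂 := ℝ) (-A) t
    have h2 := h.clm_apply (hasDerivAt_const t ψ)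
    simpa [hFdef] using h2
  have hFg : ∀ t : ℝ, HasDerivAt F (-(exp (t • (-A)) g)) t := by
    intro t
    have h := hasDerivAt_exp_smul_const (𝕂 := ℝ) (-A) t
    have h2 := h.clm_apply (hasDerivAt_const t ψ)
    simpa [hFdef, hψ] using h2
  -- continuity of the integrand
  have hcont : Continuous fun t : ℝ => exp (t • (-A)) g := by
    have h1 : Continuous fun t : ℝ => exp (t • (-A)) :=
      continuous_iff_continuousAt.2 fun t => (hasDerivAt_exp_smul_const (𝕂 := ℝ) (-A) t).continuousAt
    exact h1.clm_apply continuous_const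
  -- fundamental theorem of calculus
  have hFTC : (∫ t in (0:ℝ)..T, exp (t • (-A)) g) = ψ - F T := by
    have h := intervalIntegral.integral_eq_sub_of_hasDerivAt
      (f := F) (f' := fun t => -(exp (t • (-A)) g))
      (fun t _ => hFg t) ((hcont.neg).intervalIntegrable 0 T)
    rw [intervalIntegral.integral_neg] at h
    rw [hF0] at h
    have := neg_eq_iff_eq_neg.mp h
    rw [this]; abel
  -- rewrite the goal integrand
  have hEq : (∫ t in (0:ℝ)..T, NormedSpace.exp ((-t) • A) g)
      = ∫ t in (0:ℝ)..T, exp (t • (-A)) g := by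
    simp only [neg_smul, smul_neg]
  -- decay estimate : ‖F T‖ ≤ exp(-(αT)) ‖ψ‖
  set φ : ℝ → ℝ := fun t => ‖F t‖ ^ 2 * Real.exp (2 * α * t) with hφdef
  have hφ' : ∀ t : ℝ, HasDerivAt φ
      ((2 * (inner ℝ (-(A (F t))) (F t) : ℝ)) * Real.exp (2 * α * t)
        + ‖F t‖ ^ 2 * (2 * α * Real.exp (2 * α * t))) t := by
    intro t
    have hn : HasDerivAt (fun t => ‖F t‖ ^ 2)
        ((inner ℝ (F t) (-(A (F t))) : ℝ) + (inner ℝ (-(A (F t))) (F t) : ℝ)) t := by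
      have := (hF' t).inner (𝕜 := ℝ) (hF' t)
      have heq : (fun t => (inner ℝ (F t) (F t) : ℝ)) = fun t => ‖F t‖ ^ 2 := by
        funext s; rw [real_inner_self_eq_norm_sq]
      rwa [heq] at this
    have he : HasDerivAt (fun t => Real.exp (2 * α * t)) (2 * α * Real.exp (2 * α * t)) t := by
      have h0 : HasDerivAt (fun t : ℝ => 2 * α * t) (2 * α) t := by
        simpa using (hasDerivAt_id t).const_mul (2 * α)
      simpa [mul_comm] using h0.exp
    have := hn.mul he
    refine this.congr_deriv ?_
    rw [real_inner_comm (F t) (-(A (F t)))]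
    ring
  have hφanti : Antitone φ := by
    apply antitone_of_deriv_nonpos
    · exact fun t => (hφ' t).differentiableAt
    · intro t
      rw [(hφ' t).deriv]
      have hc := hcoer (F t)
      have hip : (inner ℝ (-(A (F t))) (F t) : ℝ) = -(inner ℝ (A (F t)) (F t) : ℝ) := by
        rw [inner_neg_left]
      have hep := Real.exp_pos (2 * α * t)
      rw [hip]
      nlinarith [norm_nonneg (F t), sq_nonneg (‖F t‖)]
  have hφT : φ T ≤ φ 0 := hφanti (le_of_lt hT)
  have hφ0 : φ 0 = ‖ψ‖ ^ 2 := by simp [hφdef, hF0]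
  have hdecay : ‖F T‖ ≤ Real.exp (-(α * T)) * ‖ψ‖ := by
    have hE : Real.exp (2 * α * T) = Real.exp (α * T) * Real.exp (α * T) := by
      rw [← Real.exp_add]; ring_nf
    have hkey : ‖F T‖ ^ 2 * (Real.exp (α * T) * Real.exp (α * T)) ≤ ‖ψ‖ ^ 2 := by
      rw [← hE]; rw [hφ0] at hφT; exact hφT
    have hEpos := Real.exp_pos (α * T)
    have hinv : Real.exp (-(α * T)) = (Real.exp (α * T))⁻¹ := by
      rw [Real.exp_neg]
    rw [hinv, mul_comm, ← div_eq_mul_inv, le_div_iff₀ hEpos]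
    nlinarith [norm_nonneg (F T), norm_nonneg ψ, sq_nonneg (‖F T‖ * Real.exp (α * T) - ‖ψ‖),
      sq_nonneg (‖F T‖ * Real.exp (α * T) + ‖ψ‖)]
  -- ‖ψ‖ ≤ ‖g‖ / α
  have hψnorm : ‖ψ‖ ≤ ‖g‖ / α := by
    have h1 : α * ‖ψ‖ ^ 2 ≤ ‖g‖ * ‖ψ‖ := by
      calc α * ‖ψ‖ ^ 2 ≤ (inner ℝ (A ψ) ψ : ℝ) := hcoer ψ
        _ = (inner ℝ g ψ : ℝ) := by rw [hψ]
        _ ≤ ‖g‖ * ‖ψ‖ := real_inner_le_norm g ψ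
    rcases eq_or_lt_of_le (norm_nonneg ψ) with h0 | h0
    · rw [← h0]; positivity
    · rw [le_div_iff₀ hα]
      nlinarith
  -- conclude
  rw [hEq, hFTC]
  have : ψ - (ψ - F T) = F T := by abel
  rw [this]
  calc ‖F T‖ ≤ Real.exp (-(α * T)) * ‖ψ‖ := hdecay
    _ ≤ Real.exp (-(α * T)) * (‖g‖ / α) := by
        exact mul_le_mul_of_nonneg_left hψnorm (Real.exp_pos _).le
    _ = Real.exp (-(α * T)) / α * ‖g‖ := by ring
end

section
/- Let H be a real Hilbert space, A : H →L[ℝ] H a bounded self-adjoint linear operator, and (φ_k)_{k ∈ ℕ} a Hilbert (orthonormal) basis of H consisting of eigenvectors of A, with A φ_k = λ_k φ_k, where (λ_k) is monotone nondecreasing and λ_0 > 0. Then for every g ∈ H, every T ≥ 0 and every N ∈ ℕ, ‖exp(−T • A) g − ∑_{k < N} exp(−λ_k T) ⟪g, φ_k⟫ φ_k‖ ≤ exp(−λ_N T) · ‖g‖. -/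
open scoped RealInnerProductSpace

section aux
variable {H : Type*} [NormedAddCommGroup H] [InnerProductSpace ℝ H] [CompleteSpace H]

lemma exp_apply_eigen (B : H →L[ℝ] H) (c : ℝ) (v : H) (hv : B v = c • v) :
    NormedSpace.exp B v = Real.exp c • v := by
  have hpow : ∀ n : ℕ, (B ^ n) v = c ^ n • v := by
    intro n; induction n with
    | zero => simp
    | succ n ih =>
        rw [pow_succ, ContinuousLinearMap.mul_apply, hv, map_smul, ih, smul_smul, ← pow_succ']
  have hsum := NormedSpace.expSeries_summable' (𝕂 := ℝ) B
  have : NormedSpace.exp B v = ∑' n : ℕ, (((n.factorial : ℝ))⁻¹ • B ^ n) v := by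
    rw [NormedSpace.exp_eq_tsum ℝ]
    exact ((ContinuousLinearMap.apply ℝ H v).map_tsum hsum)
  rw [this]
  simp_rw [ContinuousLinearMap.smul_apply, hpow, smul_smul]
  rw [Summable.tsum_smul_const]
  · congr 1
    rw [Real.exp_eq_exp_ℝ, NormedSpace.exp_eq_tsum ℝ]
    simp [smul_eq_mul]
  · have := NormedSpace.expSeries_summable' (𝕂 := ℝ) c
    simpa [smul_eq_mul] using this

end aux

set_option maxHeartbeats 1000000 in
/-- Spectral truncation error: if `(φ k)` is a Hilbert basis of eigenvectors of the bounded
self-adjoint operator `A` with nondecreasing positive eigenvalues `(lam k)`, then for any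
`g ∈ H`, `T ≥ 0` and `N ∈ ℕ`,
`‖exp(-T • A) g - ∑_{k<N} exp(-lam k * T) ⟪g, φ k⟫ φ k‖ ≤ exp(-lam N * T) ‖g‖`. -/
theorem spectral_truncation_error
    {H : Type*} [NormedAddCommGroup H] [InnerProductSpace ℝ H] [CompleteSpace H]
    (A : H →L[ℝ] H)
    (hsa : ∀ x y : H, (inner ℝ (A x) y : ℝ) = inner ℝ x (A y))
    (φ : HilbertBasis ℕ ℝ H) (lam : ℕ → ℝ) (hmono : Monotone lam) (hpos : 0 < lam 0)
    (heig : ∀ k, A (φ k) = lam k • φ k)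
    (g : H) (T : ℝ) (hT : 0 ≤ T) (N : ℕ) :
    ‖NormedSpace.exp ((-T) • A) g -
        ∑ k ∈ Finset.range N, Real.exp (-(lam k) * T) • ((inner ℝ g (φ k) : ℝ) • φ k)‖ ≤
      Real.exp (-(lam N) * T) * ‖g‖ := by
  set B : H →L[ℝ] H := (-T) • A with hBdef
  set E : H →L[ℝ] H := NormedSpace.exp B with hEdef
  -- self-adjointness
  have hA : IsSelfAdjoint A :=
    ContinuousLinearMap.isSelfAdjoint_iff_isSymmetric.mpr (fun x y => hsa x y)
  have hB : IsSelfAdjoint B := by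
    apply ContinuousLinearMap.isSelfAdjoint_iff_isSymmetric.mpr
    intro x y
    show (inner ℝ (((-T) • A) x) y : ℝ) = inner ℝ x (((-T) • A) y)
    rw [ContinuousLinearMap.smul_apply, ContinuousLinearMap.smul_apply,
      real_inner_smul_left, real_inner_smul_right, hsa x y]
  have hE : IsSelfAdjoint E := hB.exp
  have hEsym := ContinuousLinearMap.isSelfAdjoint_iff_isSymmetric.mp hE
  -- eigenvectors of E
  have hBeig : ∀ k, B (φ k) = (-(lam k) * T) • φ k := by
    intro k
    show ((-T) • A) (φ k) = _
    rw [ContinuousLinearMap.smul_apply, heig, smul_smul]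
    congr 1; ring
  have hEeig : ∀ k, E (φ k) = Real.exp (-(lam k) * T) • φ k := fun k =>
    exp_apply_eigen B _ _ (hBeig k)
  -- coefficients of E g
  have hc : ∀ k, (inner ℝ (E g) (φ k) : ℝ) = Real.exp (-(lam k) * T) * inner ℝ g (φ k) := by
    intro k
    have h1 : (inner ℝ (E g) (φ k) : ℝ) = inner ℝ g (E (φ k)) := hEsym g (φ k)
    rw [h1, hEeig, real_inner_smul_right]
  set S : H := ∑ k ∈ Finset.range N, Real.exp (-(lam k) * T) • ((inner ℝ g (φ k) : ℝ) • φ k)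
    with hSdef
  have hortho := orthonormal_iff_ite.mp φ.orthonormal
  have hcS : ∀ k, (inner ℝ S (φ k) : ℝ) =
      if k < N then Real.exp (-(lam k) * T) * inner ℝ g (φ k) else 0 := by
    intro k
    rw [hSdef, sum_inner]
    simp_rw [real_inner_smul_left, hortho, mul_ite, mul_one, mul_zero]
    rw [Finset.sum_ite_eq' (Finset.range N)]
    simp [Finset.mem_range]
  set x : H := E g - S with hxdef
  have hcx : ∀ k, (inner ℝ x (φ k) : ℝ) =
      if k < N then 0 else Real.exp (-(lam k) * T) * inner ℝ g (φ k) := by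
    intro k
    rw [hxdef, inner_sub_left, hc, hcS]
    by_cases h : k < N <;> simp [h]
  -- Parseval
  have hx2 : HasSum (fun k => (inner ℝ x (φ k) : ℝ) * inner ℝ (φ k) x) (inner ℝ x x) :=
    φ.hasSum_inner_mul_inner x x
  have hg2 : HasSum (fun k => Real.exp (-(lam N) * T) ^ 2 *
      ((inner ℝ g (φ k) : ℝ) * inner ℝ (φ k) g)) (Real.exp (-(lam N) * T) ^ 2 * inner ℝ g g) :=
    (φ.hasSum_inner_mul_inner g g).mul_left _
  have hle : ∀ k, (inner ℝ x (φ k) : ℝ) * inner ℝ (φ k) x ≤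
      Real.exp (-(lam N) * T) ^ 2 * ((inner ℝ g (φ k) : ℝ) * inner ℝ (φ k) g) := by
    intro k
    have h1 : (inner ℝ (φ k) x : ℝ) = inner ℝ x (φ k) := real_inner_comm _ _
    have h2 : (inner ℝ (φ k) g : ℝ) = inner ℝ g (φ k) := real_inner_comm _ _
    rw [h1, h2, hcx]
    by_cases h : k < N
    · simp only [h, if_true]
      have : (0:ℝ) ≤ Real.exp (-(lam N) * T) ^ 2 *
          ((inner ℝ g (φ k) : ℝ) * inner ℝ g (φ k)) :=
        mul_nonneg (sq_nonneg _) (mul_self_nonneg _)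
      simpa using this
    · simp only [h, if_false]
      have hexp : Real.exp (-(lam k) * T) ≤ Real.exp (-(lam N) * T) := by
        apply Real.exp_le_exp.mpr
        have : lam N ≤ lam k := hmono (le_of_not_gt h)
        nlinarith
      have hmul : Real.exp (-(lam k) * T) * Real.exp (-(lam k) * T) ≤
          Real.exp (-(lam N) * T) * Real.exp (-(lam N) * T) :=
        mul_le_mul hexp hexp (Real.exp_nonneg _) (Real.exp_nonneg _)
      nlinarith [sq_nonneg (inner ℝ g (φ k) : ℝ)]
  have hmain : (inner ℝ x x : ℝ) ≤ Real.exp (-(lam N) * T) ^ 2 * inner ℝ g g :=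
    hasSum_le hle hx2 hg2
  rw [real_inner_self_eq_norm_sq, real_inner_self_eq_norm_sq] at hmain
  have h2 : ‖x‖ ^ 2 ≤ (Real.exp (-(lam N) * T) * ‖g‖) ^ 2 := by
    rw [mul_pow]; exact hmain
  calc ‖x‖ = Real.sqrt (‖x‖ ^ 2) := by rw [Real.sqrt_sq (norm_nonneg x)]
    _ ≤ Real.sqrt ((Real.exp (-(lam N) * T) * ‖g‖) ^ 2) := Real.sqrt_le_sqrt h2
    _ = Real.exp (-(lam N) * T) * ‖g‖ := Real.sqrt_sq (by positivity)
end

section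
/- Fix q ∈ ℕ with q ≥ 1. Let μ : ℝ → ℝ be (q+1)-times continuously differentiable on [−1/2, 1/2], with μ^{(k)}(−1/2) = μ^{(k)}(1/2) = 0 for every k ∈ {0, …, q−1}. Let f : ℝ → ℝ be continuous, 1-periodic, with mean zero: ∫₀¹ f(y) dy = 0. Then there exists a constant C ≥ 0, depending only on μ, f and q, such that for every real L ≥ 1, |∫_{−1/2}^{1/2} μ(x) f(L x) dx| ≤ C · L^{−(q+1)}. -/
open Set intervalIntegral MeasureTheory

/-- One antiderivative step, normalized to have mean zero on `[0,1]`. -/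
noncomputable def antiStep (g : ℝ → ℝ) : ℝ → ℝ :=
  fun x => (∫ t in (0:ℝ)..x, g t) - ∫ s in (0:ℝ)..1, ∫ t in (0:ℝ)..s, g t

/-- Iterated normalized antiderivatives. -/
noncomputable def iterAnti (g : ℝ → ℝ) : ℕ → ℝ → ℝ
  | 0 => g
  | k + 1 => antiStep (iterAnti g k)

lemma antiStep_hasDerivAt {g : ℝ → ℝ} (hg : Continuous g) (x : ℝ) :
    HasDerivAt (antiStep g) (g x) x := by
  have h : HasDerivAt (fun u => ∫ t in (0:ℝ)..u, g t) (g x) x :=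
    intervalIntegral.integral_hasDerivAt_right (hg.intervalIntegrable _ _)
      (hg.stronglyMeasurableAtFilter _ _) hg.continuousAt
  exact h.sub_const _

lemma antiStep_continuous {g : ℝ → ℝ} (hg : Continuous g) : Continuous (antiStep g) :=
  continuous_iff_continuousAt.2 fun x =>
    (antiStep_hasDerivAt hg x).differentiableAt.continuousAt

lemma antiStep_periodic {g : ℝ → ℝ} (hg : Continuous g) (hper : Function.Periodic g 1)
    (hmean : ∫ t in (0:ℝ)..1, g t = 0) : Function.Periodic (antiStep g) 1 := by
  intro x
  have h1 : (∫ t in (0:ℝ)..(x+1), g t) = (∫ t in (0:ℝ)..x, g t) + ∫ t in x..(x+1), g t :=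
    (intervalIntegral.integral_add_adjacent_intervals (hg.intervalIntegrable _ _)
      (hg.intervalIntegrable _ _)).symm
  have h2 : (∫ t in x..(x+1), g t) = ∫ t in (0:ℝ)..(0+1), g t :=
    hper.intervalIntegral_add_eq x 0
  simp only [antiStep, h1, h2]
  rw [zero_add] at h2 ⊢
  rw [hmean]
  ring

lemma antiStep_mean {g : ℝ → ℝ} (hg : Continuous g) :
    ∫ x in (0:ℝ)..1, antiStep g x = 0 := by
  have hc : Continuous fun u => ∫ t in (0:ℝ)..u, g t :=
    continuous_iff_continuousAt.2 fun x =>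
      (intervalIntegral.integral_hasDerivAt_right (hg.intervalIntegrable _ _)
        (hg.stronglyMeasurableAtFilter _ _) hg.continuousAt).differentiableAt.continuousAt
  have : (∫ x in (0:ℝ)..1, antiStep g x)
      = (∫ x in (0:ℝ)..1, ∫ t in (0:ℝ)..x, g t)
        - ∫ x in (0:ℝ)..1, (∫ s in (0:ℝ)..1, ∫ t in (0:ℝ)..s, g t) := by
    unfold antiStep
    exact intervalIntegral.integral_sub (hc.intervalIntegrable _ _)
      (intervalIntegrable_const)
  simp only [intervalIntegral.integral_const, smul_eq_mul, sub_zero] at this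
  simpa using this

lemma iterAnti_continuous {g : ℝ → ℝ} (hg : Continuous g) (k : ℕ) :
    Continuous (iterAnti g k) := by
  induction k with
  | zero => exact hg
  | succ k ih => exact antiStep_continuous ih

lemma iterAnti_periodic {g : ℝ → ℝ} (hg : Continuous g) (hper : Function.Periodic g 1)
    (hmean : ∫ t in (0:ℝ)..1, g t = 0) (k : ℕ) :
    Function.Periodic (iterAnti g k) 1 ∧ ∫ t in (0:ℝ)..1, iterAnti g k t = 0 := by
  induction k with
  | zero => exact ⟨hper, hmean⟩
  | succ k ih =>
    refine ⟨antiStep_periodic (iterAnti_continuous hg k) ih.1 ih.2, ?_⟩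
    exact antiStep_mean (iterAnti_continuous hg k)

lemma iterAnti_hasDerivAt {g : ℝ → ℝ} (hg : Continuous g) (k : ℕ) (x : ℝ) :
    HasDerivAt (iterAnti g (k+1)) (iterAnti g k x) x :=
  antiStep_hasDerivAt (iterAnti_continuous hg k) x

/-- A continuous periodic function is bounded. -/
lemma periodic_bounded {g : ℝ → ℝ} (hg : Continuous g) (hper : Function.Periodic g 1) :
    ∃ M : ℝ, 0 ≤ M ∧ ∀ x, |g x| ≤ M := by
  obtain ⟨M, hM⟩ := (isCompact_Icc (a := (0:ℝ)) (b := 1)).exists_bound_of_continuousOn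
    hg.continuousOn
  refine ⟨max M 0, le_max_right _ _, fun x => ?_⟩
  obtain ⟨y, hy, hxy⟩ := hper.exists_mem_Ico₀ one_pos x
  rw [hxy]
  exact le_trans (hM y (Ico_subset_Icc_self hy)) (le_max_left _ _)

/-- Integration by parts step. -/
lemma ibp_step {a b L : ℝ} (hab : a ≤ b) (hL : 0 < L)
    {u u' G h : ℝ → ℝ}
    (hu : ContinuousOn u (Icc a b))
    (hud : ∀ x ∈ Ioo a b, HasDerivAt u (u' x) x)
    (hu' : ContinuousOn u' (Icc a b))
    (hG : ∀ x, HasDerivAt G (h x) x)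
    (hh : Continuous h) :
    ∫ x in a..b, u x * h (L * x)
      = (u b * G (L * b) - u a * G (L * a)) / L
        - (1 / L) * ∫ x in a..b, u' x * G (L * x) := by
  have hGc : Continuous G :=
    continuous_iff_continuousAt.2 fun x => (hG x).differentiableAt.continuousAt
  set P : ℝ → ℝ := fun x => u x * G (L * x) / L with hP
  set P' : ℝ → ℝ := fun x => u' x * G (L * x) / L + u x * h (L * x) with hP'
  have hPd : ∀ x ∈ Ioo a b, HasDerivWithinAt P (P' x) (Ioi x) x := by
    intro x hx
    have hcomp : HasDerivAt (fun y => G (L * y)) (h (L * x) * L) x := by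
      have := (hG (L * x)).comp x ((hasDerivAt_id x).const_mul L)
      simpa [mul_comm, Function.comp_def] using this
    have := ((hud x hx).mul hcomp).div_const L
    have heq : (u' x * G (L * x) + u x * (h (L * x) * L)) / L = P' x := by
      show _ = u' x * G (L * x) / L + u x * h (L * x)
      rw [add_div, mul_div_assoc (u x), mul_div_cancel_right₀ _ hL.ne']
    rw [heq] at this
    exact this.hasDerivWithinAt
  have hPc : ContinuousOn P (Icc a b) :=
    ((hu.mul ((hGc.comp (continuous_const.mul continuous_id)).continuousOn)).div_const L)
  have hP'c : ContinuousOn P' (Icc a b) := by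
    refine ContinuousOn.add ?_ ?_
    · exact (hu'.mul ((hGc.comp (continuous_const.mul continuous_id)).continuousOn)).div_const L
    · exact hu.mul ((hh.comp (continuous_const.mul continuous_id)).continuousOn)
  have hint : IntervalIntegrable P' volume a b := by
    rw [intervalIntegrable_iff_integrableOn_Icc_of_le hab]
    exact hP'c.integrableOn_compact isCompact_Icc
  have key : (∫ x in a..b, P' x) = P b - P a :=
    intervalIntegral.integral_eq_sub_of_hasDeriv_right_of_le hab hPc hPd hint
  have hint1 : IntervalIntegrable (fun x => u' x * G (L * x) / L) volume a b := by
    rw [intervalIntegrable_iff_integrableOn_Icc_of_le hab]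
    exact (((hu'.mul ((hGc.comp (continuous_const.mul
      continuous_id)).continuousOn)).div_const L)).integrableOn_compact isCompact_Icc
  have hint2 : IntervalIntegrable (fun x => u x * h (L * x)) volume a b := by
    rw [intervalIntegrable_iff_integrableOn_Icc_of_le hab]
    exact (hu.mul ((hh.comp (continuous_const.mul
      continuous_id)).continuousOn)).integrableOn_compact isCompact_Icc
  have split : (∫ x in a..b, P' x)
      = (∫ x in a..b, u' x * G (L * x) / L) + ∫ x in a..b, u x * h (L * x) :=
    intervalIntegral.integral_add hint1 hint2
  have hdiv : (∫ x in a..b, u' x * G (L * x) / L)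
      = (1 / L) * ∫ x in a..b, u' x * G (L * x) := by
    rw [← intervalIntegral.integral_const_mul]
    congr 1
    ext x
    ring
  rw [split, hdiv] at key
  have : P b - P a = (u b * G (L * b) - u a * G (L * a)) / L := by
    simp only [hP]; ring
  linarith [key, this.symm.le]

/-- Filtered averaging estimate. -/
theorem filtered_average_decay
    (q : ℕ) (hq : 1 ≤ q) (μ : ℝ → ℝ)
    (hμ : ContDiffOn ℝ (q + 1) μ (Set.Icc (-(1/2) : ℝ) (1/2)))
    (hend : ∀ k < q,
        iteratedDerivWithin k μ (Set.Icc (-(1/2) : ℝ) (1/2)) (-(1/2)) = 0 ∧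
        iteratedDerivWithin k μ (Set.Icc (-(1/2) : ℝ) (1/2)) (1/2) = 0)
    (f : ℝ → ℝ) (hf : Continuous f) (hper : ∀ y : ℝ, f (y + 1) = f y)
    (hmean : ∫ y in (0:ℝ)..1, f y = 0) :
    ∃ C : ℝ, 0 ≤ C ∧ ∀ L : ℝ, 1 ≤ L →
      |∫ x in (-(1/2) : ℝ)..(1/2), μ x * f (L * x)| ≤ C / L ^ (q + 1) := by
  set a : ℝ := -(1/2)
  set b : ℝ := (1/2)
  have hab : a ≤ b := by norm_num [a, b]
  set I : Set ℝ := Set.Icc a b with hI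
  have hud : UniqueDiffOn ℝ I := uniqueDiffOn_Icc (by norm_num [a, b])
  have hperf : Function.Periodic f 1 := hper
  set F : ℕ → ℝ → ℝ := iterAnti f with hF
  have hFc : ∀ k, Continuous (F k) := iterAnti_continuous hf
  have hFper : ∀ k, Function.Periodic (F k) 1 :=
    fun k => (iterAnti_periodic hf hperf hmean k).1
  have hFd : ∀ k x, HasDerivAt (F (k+1)) (F k x) x := iterAnti_hasDerivAt hf
  set g : ℕ → ℝ → ℝ := fun j => iteratedDerivWithin j μ I with hg
  have hgc : ∀ j : ℕ, j ≤ q + 1 → ContinuousOn (g j) I := by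
    intro j hj
    exact hμ.continuousOn_iteratedDerivWithin (by exact_mod_cast hj) hud
  have hgd : ∀ j : ℕ, j < q + 1 → ∀ x ∈ Ioo a b, HasDerivAt (g j) (g (j+1) x) x := by
    intro j hj x hx
    have hxI : x ∈ I := Ioo_subset_Icc_self hx
    have hdiff : DifferentiableWithinAt ℝ (g j) I x :=
      (hμ.differentiableOn_iteratedDerivWithin (by exact_mod_cast hj) hud) x hxI
    have hnb : I ∈ nhds x := Icc_mem_nhds hx.1 hx.2
    have h1 : HasDerivWithinAt (g j) (derivWithin (g j) I x) I x :=
      hdiff.hasDerivWithinAt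
    have h2 : HasDerivAt (g j) (derivWithin (g j) I x) x :=
      h1.hasDerivAt hnb
    have h3 : g (j+1) x = derivWithin (g j) I x :=
      congrFun iteratedDerivWithin_succ x
    rw [h3]
    exact h2
  -- bounds
  obtain ⟨M, hM0, hM⟩ := periodic_bounded (hFc (q+1)) (hFper (q+1))
  obtain ⟨A, hA⟩ := (isCompact_Icc (a := a) (b := b)).exists_bound_of_continuousOn
    (hgc q (Nat.le_succ q))
  obtain ⟨K, hK⟩ := (isCompact_Icc (a := a) (b := b)).exists_bound_of_continuousOn
    (hgc (q+1) le_rfl)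
  have hA0 : 0 ≤ A := le_trans (abs_nonneg _) (hA a (left_mem_Icc.2 hab))
  have hK0 : 0 ≤ K := le_trans (abs_nonneg _) (hK a (left_mem_Icc.2 hab))
  refine ⟨2 * A * M + K * M, by positivity, fun L hL => ?_⟩
  have hL0 : 0 < L := lt_of_lt_of_le one_pos hL
  -- the induction
  have main : ∀ j : ℕ, j ≤ q →
      (∫ x in a..b, μ x * f (L * x)) = (-(1/L))^j * ∫ x in a..b, g j x * F j (L * x) := by
    intro j
    induction j with
    | zero =>
      intro _
      simp only [pow_zero, one_mul]
      congr 1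
    | succ j ih =>
      intro hj
      have hj' : j < q := hj
      have step := ibp_step hab hL0 (u := g j) (u' := g (j+1)) (G := F (j+1)) (h := F j)
        (hgc j (by omega)) (hgd j (by omega)) (hgc (j+1) (by omega))
        (fun x => hFd j x) (hFc j)
      have hb0 : g j b = 0 := (hend j hj').2
      have ha0 : g j a = 0 := (hend j hj').1
      rw [hb0, ha0] at step
      simp only [zero_mul, sub_zero, zero_div, zero_sub] at step
      rw [ih (le_of_lt hj'), step]
      ring
  have key := main q le_rfl
  -- one more IBP with boundary terms
  have step := ibp_step hab hL0 (u := g q) (u' := g (q+1)) (G := F (q+1)) (h := F q)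
    (hgc q (Nat.le_succ q)) (hgd q (Nat.lt_succ_self q)) (hgc (q+1) le_rfl)
    (fun x => hFd q x) (hFc q)
  rw [key, step]
  rw [abs_mul, abs_pow, abs_neg, abs_of_pos (by positivity : (0:ℝ) < 1/L)]
  have hba : b - a = 1 := by norm_num [a, b]
  have hbound : |(g q b * F (q+1) (L * b) - g q a * F (q+1) (L * a)) / L
      - 1 / L * ∫ x in a..b, g (q+1) x * F (q+1) (L * x)| ≤ (2 * A * M + K * M) / L := by
    set X := g q b * F (q+1) (L * b) - g q a * F (q+1) (L * a) with hXdef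
    set Y := ∫ x in a..b, g (q+1) x * F (q+1) (L * x) with hYdef
    have hIb : |Y| ≤ K * M := by
      have h1 : ∀ x ∈ Set.uIoc a b, ‖g (q+1) x * F (q+1) (L*x)‖ ≤ K * M := by
        intro x hx
        have hxI : x ∈ I := by
          rw [Set.uIoc_of_le hab] at hx
          exact Set.Ioc_subset_Icc_self hx
        rw [Real.norm_eq_abs, abs_mul]
        exact mul_le_mul (hK x hxI) (hM _) (abs_nonneg _) hK0
      have h2 := intervalIntegral.norm_integral_le_of_norm_le_const h1
      rw [Real.norm_eq_abs] at h2
      calc |Y| ≤ K * M * |b - a| := h2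
        _ = K * M := by rw [hba, abs_one, mul_one]
    have hXb : |g q b * F (q+1) (L * b)| ≤ A * M := by
      rw [abs_mul]
      exact mul_le_mul (hA b (Set.right_mem_Icc.2 hab)) (hM _) (abs_nonneg _) hA0
    have hXa : |g q a * F (q+1) (L * a)| ≤ A * M := by
      rw [abs_mul]
      exact mul_le_mul (hA a (Set.left_mem_Icc.2 hab)) (hM _) (abs_nonneg _) hA0
    have hX : |X| ≤ 2 * A * M := by
      calc |X| ≤ |g q b * F (q+1) (L * b)| + |g q a * F (q+1) (L * a)| := abs_sub _ _
        _ ≤ A * M + A * M := add_le_add hXb hXa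
        _ = 2 * A * M := by ring
    have htri : |X / L - 1 / L * Y| ≤ |X| / L + 1 / L * |Y| := by
      have h1 : |X / L - 1 / L * Y| ≤ |X / L| + |1 / L * Y| := abs_sub _ _
      rw [abs_div, abs_mul, abs_of_pos hL0, abs_of_pos (by positivity : (0:ℝ) < 1 / L)] at h1
      exact h1
    have h2 : |X| / L ≤ 2 * A * M / L :=
      div_le_div_of_nonneg_right hX hL0.le
    have h3 : 1 / L * |Y| ≤ K * M / L := by
      rw [one_div, inv_mul_eq_div]
      exact div_le_div_of_nonneg_right hIb hL0.le
    calc |X / L - 1 / L * Y| ≤ |X| / L + 1 / L * |Y| := htri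
      _ ≤ 2 * A * M / L + K * M / L := add_le_add h2 h3
      _ = (2 * A * M + K * M) / L := by rw [← add_div]
  calc (1/L)^q * |(g q b * F (q+1) (L * b) - g q a * F (q+1) (L * a)) / L
        - 1 / L * ∫ x in a..b, g (q+1) x * F (q+1) (L * x)|
      ≤ (1/L)^q * ((2 * A * M + K * M) / L) := by
        apply mul_le_mul_of_nonneg_left hbound (by positivity)
    _ = (2 * A * M + K * M) / L ^ (q + 1) := by
        rw [pow_succ, div_pow, one_pow, div_mul_div_comm, one_mul]
  -- done
end
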